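/- arXiv:1910.12937 — 2 statements merged into one kernel-verified Lean document; each statement's English description precedes it below -/
import Mathlib

section
/- Under the population directed DC-SBM, the population graph transition matrix factors as 𝒫 = Z 𝐏 Z^T Θ^in, where 𝐏 = [𝐃^out]^{-1} 𝐁 is the block transition matrix. Moreover, for every positive integer k, 𝒫^k = Z 𝐏^k Z^T Θ^in. -/
open Matrix BigOperators

/-- Under the population directed DC-SBM, the population transition
matrix factors as `𝒫 = Z 𝐏 Zᵀ Θin` with `𝐏 = (𝐃out)⁻¹ 𝐁`, and moreover
`𝒫^k = Z 𝐏^k Zᵀ Θin` for every `k ≥ 1`. -/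
theorem dcsbm_transition_factorization
    {N K : ℕ} (z : Fin N → Fin K)
    (B : Matrix (Fin K) (Fin K) ℝ) (hB : ∀ i j, 0 < B i j)
    (θin θout : Fin N → ℝ)
    (hθin : ∀ v, 0 < θin v) (hθout : ∀ v, 0 < θout v)
    (hin1 : ∀ i, ∑ v, (if z v = i then θin v else 0) = 1)
    (hout1 : ∀ i, ∑ v, (if z v = i then θout v else 0) = 1)
    (Z : Matrix (Fin N) (Fin K) ℝ) (hZ : ∀ u i, Z u i = if z u = i then 1 else 0)
    (A : Matrix (Fin N) (Fin N) ℝ)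
    (hA : A = Matrix.diagonal θout * Z * B * Zᵀ * Matrix.diagonal θin)
    (dout : Fin N → ℝ) (hdout : ∀ u, dout u = ∑ v, A u v)
    (P : Matrix (Fin N) (Fin N) ℝ)
    (hP : P = Matrix.diagonal (fun u => (dout u)⁻¹) * A)
    (Bdout : Fin K → ℝ) (hBdout : ∀ i, Bdout i = ∑ j, B i j)
    (bP : Matrix (Fin K) (Fin K) ℝ)
    (hbP : bP = Matrix.diagonal (fun i => (Bdout i)⁻¹) * B) :
    P = Z * bP * Zᵀ * Matrix.diagonal θin ∧
      ∀ k : ℕ, 1 ≤ k → P ^ k = Z * (bP ^ k) * Zᵀ * Matrix.diagonal θin := by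
  -- sandwiching a K×K matrix by Z collapses to block entries
  have hZMZ : ∀ (M : Matrix (Fin K) (Fin K) ℝ) (u v : Fin N),
      (Z * M * Zᵀ) u v = M (z u) (z v) := by
    intro M u v
    simp only [Matrix.mul_apply, Matrix.transpose_apply, hZ, ite_mul, one_mul, zero_mul,
      mul_ite, mul_one, mul_zero]
    rw [Finset.sum_eq_single (z v)]
    · simp only [if_pos rfl]
      rw [Finset.sum_eq_single (z u)]
      · simp
      · intro b _ hb; simp [Ne.symm hb]
      · simp
    · intro b _ hb
      simp [Ne.symm hb]
    · simp
  -- entrywise formula for A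
  have hAe : ∀ u v, A u v = θout u * B (z u) (z v) * θin v := by
    intro u v
    rw [hA, show Matrix.diagonal θout * Z * B * Zᵀ * Matrix.diagonal θin
        = Matrix.diagonal θout * (Z * B * Zᵀ) * Matrix.diagonal θin by
          simp [Matrix.mul_assoc], Matrix.mul_diagonal, Matrix.diagonal_mul, hZMZ]
  -- block sums
  have hBsum : ∀ i : Fin K, ∑ v, B i (z v) * θin v = Bdout i := by
    intro i
    have expand : ∀ v, B i (z v) * θin v = ∑ j, (if z v = j then θin v else 0) * B i j := by
      intro v
      rw [Finset.sum_eq_single (z v)]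
      · simp [mul_comm]
      · intro b _ hb; simp [Ne.symm hb]
      · simp
    simp_rw [expand]
    rw [Finset.sum_comm]
    simp_rw [← Finset.sum_mul]
    simp [hin1, hBdout]
  have hdoute : ∀ u, dout u = θout u * Bdout (z u) := by
    intro u
    rw [hdout]
    simp_rw [hAe, mul_assoc]
    rw [← Finset.mul_sum, hBsum]
  have hBd_pos : ∀ i, 0 < Bdout i := by
    intro i
    rw [hBdout]
    exact Finset.sum_pos (fun j _ => hB i j) ⟨i, Finset.mem_univ i⟩
  -- the factorization
  have hfact : P = Z * bP * Zᵀ * Matrix.diagonal θin := by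
    ext u v
    rw [hP, Matrix.diagonal_mul, hAe, hdoute, Matrix.mul_diagonal, hZMZ, hbP,
      Matrix.diagonal_mul]
    have h1 : θout u ≠ 0 := (hθout u).ne'
    have h2 : Bdout (z u) ≠ 0 := (hBd_pos (z u)).ne'
    field_simp
  -- Zᵀ Θin Z = 1
  have hZTZ : Zᵀ * Matrix.diagonal θin * Z = 1 := by
    ext i j
    rw [Matrix.mul_apply]
    simp only [Matrix.mul_diagonal, Matrix.transpose_apply, hZ]
    by_cases hij : i = j
    · subst hij
      rw [Matrix.one_apply_eq]
      have he : ∀ v : Fin N, (if z v = i then (1:ℝ) else 0) * θin v * (if z v = i then 1 else 0)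
          = if z v = i then θin v else 0 := by
        intro v; by_cases h : z v = i <;> simp [h]
      simp_rw [he]
      exact hin1 i
    · rw [Matrix.one_apply_ne hij]
      apply Finset.sum_eq_zero
      intro v _
      by_cases h : z v = i
      · simp [h, hij]
      · simp [h]
  refine ⟨hfact, ?_⟩
  intro k hk
  induction k with
  | zero => omega
  | succ n ih =>
    rcases Nat.eq_or_lt_of_le hk with h1 | h1
    · have hn0 : n = 0 := by omega
      subst hn0
      simpa using hfact
    · have hn : 1 ≤ n := by omega
      rw [pow_succ, ih hn, hfact]
      have key : Z * bP ^ n * Zᵀ * Matrix.diagonal θin * (Z * bP * Zᵀ * Matrix.diagonal θin)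
          = Z * bP ^ n * (Zᵀ * Matrix.diagonal θin * Z) * bP * Zᵀ * Matrix.diagonal θin := by
        simp only [Matrix.mul_assoc]
      rw [key, hZTZ, Matrix.mul_one, Matrix.mul_assoc Z, ← pow_succ]
end

section
/- Let 𝒫 be the transition matrix of a finite strongly connected weighted graph with all node degrees positive, let v₀ be a seed node, α ∈ (0,1), and let 𝓅 be the PPR vector solving 𝓅^T = α e_{v₀}^T + (1-α) 𝓅^T 𝒫. Then the degree-adjusted PPR vector 𝓅*_v = 𝓅_v / d_v attains its strict maximum at the seed: 𝓅*_{v₀} > 𝓅*_v for all v ≠ v₀. -/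
open Matrix BigOperators

/-- For a strongly connected weighted graph with positive degrees,
`α ∈ (0,1)`, and seed `v₀`, the degree-adjusted PPR vector attains its strict
maximum at the seed: `𝓅_{v₀}/d_{v₀} > 𝓅_v/d_v` for all `v ≠ v₀`. -/
theorem appr_max_at_seed
    {N : ℕ} (A : Matrix (Fin N) (Fin N) ℝ)
    (hsym : A.IsSymm) (hA0 : ∀ i j, 0 ≤ A i j)
    (d : Fin N → ℝ) (hd : ∀ v, d v = ∑ u, A v u) (hdpos : ∀ v, 0 < d v)
    (hconn : ∀ i j, ∃ k : ℕ, 0 < (A ^ k) i j)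
    (P : Matrix (Fin N) (Fin N) ℝ) (hP : ∀ u v, P u v = A u v / d u)
    (v₀ : Fin N) (α : ℝ) (hα : α ∈ Set.Ioo (0 : ℝ) 1)
    (p : Fin N → ℝ) (hp0 : ∀ v, 0 ≤ p v) (hp1 : ∑ v, p v = 1)
    (hp : p = α • (Pi.single v₀ 1 : Fin N → ℝ) + (1 - α) • (p ᵥ* P)) :
    ∀ v, v ≠ v₀ → p v / d v < p v₀ / d v₀ := by
  obtain ⟨hα0, hα1⟩ := hα
  set q : Fin N → ℝ := fun v => p v / d v with hq
  -- the componentwise fixed-point equation in terms of q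
  have key : ∀ v, p v = α * (if v = v₀ then 1 else 0) + (1 - α) * ∑ u, q u * A u v := by
    intro v
    have h := congrFun hp v
    simp only [Pi.add_apply, Pi.smul_apply, smul_eq_mul, Pi.single_apply, vecMul,
      dotProduct] at h
    rw [h]
    congr 2
    refine Finset.sum_congr rfl fun u _ => ?_
    rw [hP, hq, div_mul_eq_mul_div, mul_div_assoc]
  -- a maximizer of q
  obtain ⟨w, -, hw⟩ := Finset.exists_max_image Finset.univ q ⟨v₀, Finset.mem_univ v₀⟩
  have hwle : ∀ v, q v ≤ q w := fun v => hw v (Finset.mem_univ v)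
  -- the maximum is positive
  have hMpos : 0 < q w := by
    have : ∃ v, 0 < p v := by
      by_contra h
      push_neg at h
      have : ∑ v, p v = 0 :=
        Finset.sum_eq_zero fun v _ => le_antisymm (h v) (hp0 v)
      rw [hp1] at this; norm_num at this
    obtain ⟨v, hv⟩ := this
    exact lt_of_lt_of_le (div_pos hv (hdpos v)) (hwle v)
  -- bound: ∑ q u * A u v ≤ q w * d v
  have hbound : ∀ v, ∑ u, q u * A u v ≤ q w * d v := by
    intro v
    calc ∑ u, q u * A u v ≤ ∑ u, q w * A u v :=
          Finset.sum_le_sum fun u _ => mul_le_mul_of_nonneg_right (hwle u) (hA0 u v)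
      _ = q w * ∑ u, A v u := by
          rw [← Finset.mul_sum]
          congr 1
          exact Finset.sum_congr rfl fun u _ => hsym.apply v u
      _ = q w * d v := by rw [hd]
  -- for v ≠ v₀, q v ≤ (1-α) * q w
  have hstep : ∀ v, v ≠ v₀ → q v ≤ (1 - α) * q w := by
    intro v hv
    have h := key v
    rw [if_neg hv] at h
    have h2 : p v ≤ (1 - α) * (q w * d v) := by
      rw [h]; simp only [mul_zero, zero_add]
      exact mul_le_mul_of_nonneg_left (hbound v) (by linarith)
    rw [hq]
    rw [div_le_iff₀ (hdpos v)]
    calc p v ≤ (1 - α) * (q w * d v) := h2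
      _ = (1 - α) * q w * d v := by ring
  -- hence w = v₀
  have hwv : w = v₀ := by
    by_contra hwv
    have := hstep w hwv
    nlinarith
  intro v hv
  have := hstep v hv
  have : q v < q w := lt_of_le_of_lt this (by nlinarith)
  rw [hwv] at this
  exact this
end
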